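/- Let p be a prime and G a finite nonabelian p-group that is an F-group. Then the number of distinct centralizers C_G(g) with g ∈ G \ Z(G) (equivalently, the number of distinct subgroups Z(C_G(g)) for noncentral g) is congruent to 1 modulo p. -/
import Mathlib


variable {G : Type*} [Group G] [Fintype G]

/-- The centralizer of an element `g` of `G`. -/
def centG (g : G) : Subgroup G := Subgroup.centralizer ({g} : Set G)

/-- `Z(g) = Z(C_G(g))`, the center of the centralizer of `g`, as a subgroup of `G`. -/
def zCent (g : G) : Subgroup G :=
  (Subgroup.center ↥(Subgroup.centralizer ({g} : Set G))).map
    (Subgroup.centralizer ({g} : Set G)).subtype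

lemma self_mem_centG (g : G) : g ∈ centG g :=
  Subgroup.mem_centralizer_iff.mpr (by simp)

lemma mem_zCent_of_centG_eq {x g : G} (h : centG x = centG g) : x ∈ zCent g := by
  have hx' : x ∈ centG g := h ▸ self_mem_centG x
  have hx : x ∈ Subgroup.centralizer ({g} : Set G) := hx'
  refine Subgroup.mem_map.mpr ⟨⟨x, hx⟩, ?_, rfl⟩
  rw [Subgroup.mem_center_iff]
  intro c
  have hc : (c : G) ∈ centG x := h ▸ c.2
  have hcx : x * (c : G) = (c : G) * x :=
    Subgroup.mem_centralizer_iff.mp hc x (by simp)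
  exact Subtype.ext (by simpa using hcx.symm)

lemma self_mem_zCent (g : G) : g ∈ zCent g := mem_zCent_of_centG_eq rfl

lemma center_le_zCent (g : G) : Subgroup.center G ≤ zCent g := by
  intro z hz
  have hz' := Subgroup.mem_center_iff.mp hz
  have hzc : z ∈ Subgroup.centralizer ({g} : Set G) :=
    Subgroup.mem_centralizer_iff.mpr (by intro h hh; simp only [Set.mem_singleton_iff] at hh; subst hh; exact hz' _)
  refine Subgroup.mem_map.mpr ⟨⟨z, hzc⟩, ?_, rfl⟩
  rw [Subgroup.mem_center_iff]
  intro c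
  exact Subtype.ext (hz' c)

lemma centG_le_of_mem_zCent {x y : G} (hy : y ∈ zCent x) : centG x ≤ centG y := by
  obtain ⟨y', hy', rfl⟩ := Subgroup.mem_map.mp hy
  intro c hc
  have h := Subgroup.mem_center_iff.mp hy' ⟨c, hc⟩
  refine Subgroup.mem_centralizer_iff.mpr ?_
  intro h' hh; simp at hh; subst hh
  simpa [Subtype.ext_iff] using h.symm

theorem stmt_19 (p : ℕ) (hp : p.Prime) (hpG : IsPGroup p G)
    (hna : ∃ a b : G, a * b ≠ b * a)
    (hF : ∀ x y : G, x ∉ Subgroup.center G → y ∉ Subgroup.center G →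
      centG x ≤ centG y → centG x = centG y) :
    Set.ncard {H : Subgroup G | ∃ g : G, g ∉ Subgroup.center G ∧ H = centG g}
      ≡ 1 [MOD p] := by
  classical
  have hp1 : 1 < p := hp.one_lt
  haveI : Fact p.Prime := ⟨hp⟩
  obtain ⟨a, b, hab⟩ := hna
  have haZ : a ∉ Subgroup.center G := fun h => hab ((Subgroup.mem_center_iff.mp h b).symm)
  set Z := Subgroup.center G with hZdef
  set T : Finset G := Finset.univ.filter (fun x => x ∉ Z) with hT
  set S : Finset (Subgroup G) := T.image centG with hS
  set nZ : ℕ := (Z : Set G).toFinset.card with hnZ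
  -- all subgroup cards are p-powers
  have hcardpow : ∀ H : Subgroup G, ∃ k, (H : Set G).toFinset.card = p ^ k := by
    intro H
    obtain ⟨k, hk⟩ := (IsPGroup.iff_card (p := p) (G := H)).mp (hpG.to_subgroup H)
    refine ⟨k, ?_⟩
    rw [Set.toFinset_card]
    simpa [Nat.card_eq_fintype_card] using hk
  have hGpow : ∃ k, Fintype.card G = p ^ k := by
    obtain ⟨k, hk⟩ := (IsPGroup.iff_card (p := p) (G := G)).mp hpG
    exact ⟨k, by simpa [Nat.card_eq_fintype_card] using hk⟩
  -- key divisibility lemma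
  have hkey : ∀ m n : ℕ, (∃ k, m = p ^ k) → (∃ k, n = p ^ k) → m < n → p * m ∣ n := by
    rintro m n ⟨km, rfl⟩ ⟨kn, rfl⟩ hlt
    have hk : km < kn := (Nat.pow_lt_pow_iff_right hp1).mp hlt
    have : p * p ^ km = p ^ (km + 1) := (pow_succ' p km).symm
    rw [this]
    exact pow_dvd_pow p hk
  -- T.card + nZ = |G|
  have hTZ : T.card + nZ = Fintype.card G := by
    have h1 : (Z : Set G).toFinset = Finset.univ.filter (fun x => x ∈ Z) := by
      ext x; simp
    rw [hT, hnZ, h1, add_comm, ← Finset.card_univ]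
    exact Finset.card_filter_add_card_filter_not (p := fun x => x ∈ Z)
  -- nZ < |G|
  have hZlt : nZ < Fintype.card G := by
    have hne : (Z : Set G).toFinset ≠ Finset.univ := by
      intro h
      apply haZ
      have ha : a ∈ (Z : Set G).toFinset := by rw [h]; exact Finset.mem_univ a
      exact Set.mem_toFinset.mp ha
    exact Finset.card_lt_card (Finset.ssubset_univ_iff.mpr hne)
  have hdvdG : p * nZ ∣ Fintype.card G := hkey _ _ (hcardpow Z) hGpow hZlt
  -- per-fiber divisibility
  have hfiber : ∀ C ∈ S, p * nZ ∣ (T.filter (fun x => centG x = C)).card + nZ := by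
    intro C hC
    obtain ⟨g, hgT, hgC⟩ := Finset.mem_image.mp hC
    have hgZ : g ∉ Z := (Finset.mem_filter.mp hgT).2
    have hfib : T.filter (fun x => centG x = C) =
        (zCent g : Set G).toFinset \ (Z : Set G).toFinset := by
      ext x
      simp only [hT, Finset.mem_filter, Finset.mem_univ, true_and, Finset.mem_sdiff,
        Set.mem_toFinset, SetLike.mem_coe]
      constructor
      · rintro ⟨hxZ, hxC⟩
        exact ⟨mem_zCent_of_centG_eq (hxC.trans hgC.symm), hxZ⟩
      · rintro ⟨hxz, hxZ⟩
        exact ⟨hxZ, ((hF g x hgZ hxZ (centG_le_of_mem_zCent hxz)).symm).trans hgC⟩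
    have hsub : (Z : Set G).toFinset ⊆ (zCent g : Set G).toFinset := by
      rw [Set.toFinset_subset_toFinset]
      exact fun z hz => center_le_zCent g hz
    have hlt : nZ < (zCent g : Set G).toFinset.card := by
      refine Finset.card_lt_card ⟨hsub, fun hsup => hgZ ?_⟩
      have := hsup (Set.mem_toFinset.mpr (self_mem_zCent g))
      exact Set.mem_toFinset.mp this
    rw [hfib, Finset.card_sdiff_of_subset hsub, Nat.sub_add_cancel hlt.le]
    exact hkey _ _ (hcardpow Z) (hcardpow (zCent g)) hlt
  -- fiberwise counting
  have hcount : T.card = ∑ C ∈ S, (T.filter (fun x => centG x = C)).card :=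
    Finset.card_eq_sum_card_fiberwise (fun x hx => Finset.mem_image_of_mem _ hx)
  have hsumdvd : p * nZ ∣ T.card + S.card * nZ := by
    have h1 : ∑ C ∈ S, ((T.filter (fun x => centG x = C)).card + nZ)
        = T.card + S.card * nZ := by
      rw [Finset.sum_add_distrib, Finset.sum_const, smul_eq_mul, ← hcount]
    rw [← h1]
    exact Finset.dvd_sum hfiber
  have hSpos : 1 ≤ S.card :=
    Finset.card_pos.mpr ⟨centG a, Finset.mem_image_of_mem _
      (Finset.mem_filter.mpr ⟨Finset.mem_univ a, haZ⟩)⟩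
  -- final arithmetic
  have hdvdT : p * nZ ∣ T.card + nZ := hTZ ▸ hdvdG
  have hmul : S.card * nZ = (S.card - 1) * nZ + nZ := by
    have : S.card = (S.card - 1) + 1 := (Nat.succ_pred_eq_of_pos hSpos).symm
    rw [this, Nat.succ_sub_one, Nat.add_mul, Nat.one_mul]
  have hdvdfin : p * nZ ∣ (S.card - 1) * nZ := by
    have h := Nat.dvd_sub hsumdvd hdvdT
    have he : T.card + S.card * nZ - (T.card + nZ) = (S.card - 1) * nZ := by
      rw [hmul]; omega
    rwa [he] at h
  have hnZpos : 0 < nZ := by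
    exact Finset.card_pos.mpr ⟨1, Set.mem_toFinset.mpr Z.one_mem⟩
  have hpdvd : p ∣ S.card - 1 := by
    have : nZ * p ∣ nZ * (S.card - 1) := by
      rw [Nat.mul_comm nZ p, Nat.mul_comm nZ (S.card - 1)]
      exact hdvdfin
    exact (Nat.mul_dvd_mul_iff_left hnZpos).mp this
  have hsetS : {H : Subgroup G | ∃ g : G, g ∉ Subgroup.center G ∧ H = centG g} = ↑S := by
    ext H
    simp only [Set.mem_setOf_eq, hS, Finset.coe_image, Set.mem_image, Finset.mem_coe,
      hT, Finset.mem_coe, Finset.mem_filter, Finset.mem_univ, true_and]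
    constructor
    · rintro ⟨g, hg, rfl⟩; exact ⟨g, hg, rfl⟩
    · rintro ⟨g, hg, rfl⟩; exact ⟨g, hg, rfl⟩
  rw [hsetS, Set.ncard_coe_finset]
  exact ((Nat.modEq_iff_dvd' hSpos).mpr hpdvd).symm
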